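/- Define G_full : ℝ⁴ → ℝ by G_full(x₁, x₂, p, q) = 45·(1−x₁) + 5·x₁ + 50·x₂ + (95·x₁ − 45·(1−x₁) + 50·x₂)·p + (20·(1−x₁) − 5·x₁ + 200·(1−x₂) − 50·x₂)·q − (5·x₁ + 50·x₂)·p·q − (10·(1−x₁) + 100·(1−x₂))·q². Then the supremum over (x₁, x₂) ∈ [0,1] × [0,1] of the infimum, over all finitely supported probability distributions μ on [1/10, 9/10] × [1/10, 9/10], of E_μ[(p,q) ↦ G_full(x₁, x₂, p, q)] equals 28871/390 (i.e., 74 + 11/390). -/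

import Mathlib

/-- A finitely supported probability distribution on a set `S`:
a finitely supported nonnegative function with support inside `S` summing to `1`. -/
def IsFinProbDist {α : Type*} (S : Set α) (μ : α →₀ ℝ) : Prop :=
  (∀ u, 0 ≤ μ u) ∧ ↑μ.support ⊆ S ∧ (∑ u ∈ μ.support, μ u) = 1

/-- Expectation of `g` under a finitely supported distribution `μ`. -/
noncomputable def expect {α : Type*} (μ : α →₀ ℝ) (g : α → ℝ) : ℝ :=
  ∑ u ∈ μ.support, μ u * g u

noncomputable def GFull (x₁ x₂ p q : ℝ) : ℝ :=
  45 * (1 - x₁) + 5 * x₁ + 50 * x₂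
    + (95 * x₁ - 45 * (1 - x₁) + 50 * x₂) * p
    + (20 * (1 - x₁) - 5 * x₁ + 200 * (1 - x₂) - 50 * x₂) * q
    - (5 * x₁ + 50 * x₂) * (p * q)
    - (10 * (1 - x₁) + 100 * (1 - x₂)) * q ^ 2

/-!
Nature's mixed policy putting weights `221/312`, `9/312`, `82/312` on the corners
`(1/10, 1/10)`, `(9/10, 1/10)`, `(9/10, 9/10)` makes the expected value of `G_full` equal to
`c = 28871/390` whatever the agent plays, so no agent policy guarantees more than `c`. Conversely,
at `x* = (17/117, 643/1170)` one has `G_full(x*, p, q) - c = (10q - 1)(2871 - 1100p - 2090q)/390`,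
a product of two factors that are nonnegative on the box, so `x*` guarantees `c`. Mixing does not
help nature beyond pure policies, since an expectation is at least the infimum of its integrand.
-/

open Set

section FinProbDist

variable {α : Type*}

theorem IsFinProbDist.le_expect {S : Set α} {μ : α →₀ ℝ} {g : α → ℝ} {m : ℝ}
    (hμ : IsFinProbDist S μ) (hg : ∀ u ∈ S, m ≤ g u) : m ≤ expect μ g := by
  obtain ⟨hnonneg, hsupp, hsum⟩ := hμ
  calc m = ∑ u ∈ μ.support, μ u * m := by rw [← Finset.sum_mul, hsum, one_mul]
    _ ≤ ∑ u ∈ μ.support, μ u * g u :=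
        Finset.sum_le_sum fun u hu => mul_le_mul_of_nonneg_left (hg u (hsupp hu)) (hnonneg u)

theorem isFinProbDist_single {S : Set α} {u : α} (hu : u ∈ S) :
    IsFinProbDist S (Finsupp.single u (1 : ℝ)) :=
  ⟨Finsupp.single_nonneg.2 zero_le_one, by simpa using hu, by simp⟩

theorem expect_single (u : α) (g : α → ℝ) : expect (Finsupp.single u 1) g = g u := by
  simp [expect]

theorem sInf_expect_eq_sInf_image {S : Set α} {g : α → ℝ} (hS : S.Nonempty)
    (hg : BddBelow (g '' S)) :
    sInf {w | ∃ μ : α →₀ ℝ, IsFinProbDist S μ ∧ w = expect μ g} = sInf (g '' S) := by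
  have hpure : g '' S ⊆ {w | ∃ μ : α →₀ ℝ, IsFinProbDist S μ ∧ w = expect μ g} := by
    rintro _ ⟨u, hu, rfl⟩
    exact ⟨_, isFinProbDist_single hu, (expect_single u g).symm⟩
  have hlower : ∀ w ∈ {w | ∃ μ : α →₀ ℝ, IsFinProbDist S μ ∧ w = expect μ g},
      sInf (g '' S) ≤ w := by
    rintro _ ⟨μ, hμ, rfl⟩
    exact hμ.le_expect fun u hu => csInf_le hg (mem_image_of_mem g hu)
  exact le_antisymm (csInf_le_csInf ⟨_, hlower⟩ (hS.image g) hpure)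
    (le_csInf ((hS.image g).mono hpure) hlower)

end FinProbDist

abbrev natureBox : Set (ℝ × ℝ) := Icc (1/10 : ℝ) (9/10) ×ˢ Icc (1/10 : ℝ) (9/10)

theorem bddBelow_GFull_image (x₁ x₂ : ℝ) :
    BddBelow ((fun u : ℝ × ℝ => GFull x₁ x₂ u.1 u.2) '' natureBox) :=
  (isCompact_Icc.prod isCompact_Icc).bddBelow_image (by simp only [GFull]; fun_prop)

theorem GFull_corner_combination (x₁ x₂ : ℝ) :
    221 * GFull x₁ x₂ (1/10) (1/10) + 9 * GFull x₁ x₂ (9/10) (1/10)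
      + 82 * GFull x₁ x₂ (9/10) (9/10) = 312 * (28871 / 390) := by
  unfold GFull; ring

theorem exists_corner_GFull_le (x₁ x₂ : ℝ) :
    ∃ u ∈ natureBox, GFull x₁ x₂ u.1 u.2 ≤ 28871 / 390 := by
  have hlow : (1/10 : ℝ) ∈ Icc (1/10 : ℝ) (9/10) := by norm_num
  have hhigh : (9/10 : ℝ) ∈ Icc (1/10 : ℝ) (9/10) := by norm_num
  by_contra! hcorners
  linarith [GFull_corner_combination x₁ x₂, hcorners (1/10, 1/10) ⟨hlow, hlow⟩,
    hcorners (9/10, 1/10) ⟨hhigh, hlow⟩, hcorners (9/10, 9/10) ⟨hhigh, hhigh⟩]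

theorem sInf_GFull_image_le (x₁ x₂ : ℝ) :
    sInf ((fun u : ℝ × ℝ => GFull x₁ x₂ u.1 u.2) '' natureBox) ≤ 28871 / 390 := by
  obtain ⟨u, hu, hle⟩ := exists_corner_GFull_le x₁ x₂
  exact (csInf_le (bddBelow_GFull_image x₁ x₂) (mem_image_of_mem _ hu)).trans hle

theorem GFull_saddle_sub (p q : ℝ) :
    GFull (17/117) (643/1170) p q - 28871 / 390 =
      (10 * q - 1) * (2871 - 1100 * p - 2090 * q) / 390 := by
  unfold GFull; ring

theorem sInf_GFull_saddle_image :
    sInf ((fun u : ℝ × ℝ => GFull (17/117) (643/1170) u.1 u.2) '' natureBox) =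
      28871 / 390 := by
  refine IsLeast.csInf_eq ⟨⟨(1/10, 1/10), by norm_num, by norm_num [GFull]⟩, ?_⟩
  rintro _ ⟨⟨p, q⟩, ⟨⟨hp₁, hp₂⟩, hq₁, hq₂⟩, rfl⟩
  have hfactors : 0 ≤ (10 * q - 1) * (2871 - 1100 * p - 2090 * q) / 390 :=
    div_nonneg (mul_nonneg (by linarith) (by linarith)) (by norm_num)
  linarith [GFull_saddle_sub p q]

theorem fullStickiness_mixed_optimal_value :
    sSup {v : ℝ | ∃ x₁ ∈ Set.Icc (0 : ℝ) 1, ∃ x₂ ∈ Set.Icc (0 : ℝ) 1,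
        v = sInf {w : ℝ | ∃ μ : (ℝ × ℝ) →₀ ℝ,
          IsFinProbDist (Set.Icc (1/10 : ℝ) (9/10) ×ˢ Set.Icc (1/10 : ℝ) (9/10)) μ ∧
          w = expect μ (fun u => GFull x₁ x₂ u.1 u.2)}} = 28871 / 390 := by
  have hpure : ∀ x₁ x₂ : ℝ,
      sInf {w : ℝ | ∃ μ : (ℝ × ℝ) →₀ ℝ, IsFinProbDist natureBox μ ∧
          w = expect μ (fun u => GFull x₁ x₂ u.1 u.2)} =
        sInf ((fun u : ℝ × ℝ => GFull x₁ x₂ u.1 u.2) '' natureBox) := fun x₁ x₂ =>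
    sInf_expect_eq_sInf_image ⟨(1/10, 1/10), by norm_num⟩ (bddBelow_GFull_image x₁ x₂)
  simp only [hpure]
  refine IsGreatest.csSup_eq ⟨⟨17/117, by norm_num, 643/1170, by norm_num,
    sInf_GFull_saddle_image.symm⟩, ?_⟩
  rintro _ ⟨x₁, -, x₂, -, rfl⟩
  exact sInf_GFull_image_le x₁ x₂
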